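/- The operator T defined by (Tf)(x) = x·f({1/x}) on L^p((0,1), m), where m is the Gauss measure dm = dx/((1+x)log 2), satisfies ∫₀¹ |Tⁿf(x)|^p dm(x) ≤ g^{(n-1)p} ∫₀¹ |f(x)|^p dm(x) for all n ≥ 1, where g = (√5 - 1)/2. -/

import Mathlib

open Real MeasureTheory

/-- The Gauss measure `dm = dx / ((1+x) log 2)` on `(0,1)`. -/
noncomputable def gaussMeasure : Measure ℝ :=
  (volume.restrict (Set.Ioo (0 : ℝ) 1)).withDensity
    (fun x => ENNReal.ofReal (1 / ((1 + x) * Real.log 2)))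

/-- The transfer-type operator `(Tf)(x) = x · f({1/x})`. -/
noncomputable def Tgauss (f : ℝ → ℝ) : ℝ → ℝ := fun x => x * f (Int.fract (1 / x))

/-!
Write `xₖ = gaussMap^[k] x`, so that `Tⁿ f (x) = x₀ ⋯ xₙ₋₁ · f (xₙ)`. Since `xₖ (1 + xₖ₊₁) ≤ 1`,
the quantity `g · x₀ ⋯ xₙ₋₁ · (1 + g xₙ)` shrinks by the factor `g = φ⁻¹` at each step (`g` is the
fixed point of `t ↦ 1 / (1 + t)`), whence `x₀ ⋯ xₙ₋₁ ≤ gⁿ⁻¹` on `[0, 1]`. The Gauss map preserves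
the Gauss measure: changing variables along each inverse branch `y ↦ 1 / (y + k + 1)` reduces this
to Kuzmin's telescoping identity `∑ₖ h (1 / (y + k + 1)) / (y + k + 1)² = h y` for the density
`h`. Hence `∫ |f ∘ gaussMapⁿ|^p dm = ∫ |f|^p dm`.
-/

open Set Filter Topology Function
open scoped ENNReal goldenRatio

lemma hasSum_sub_succ_of_antitone {f : ℕ → ℝ} (hf : Antitone f) (hlim : Tendsto f atTop (𝓝 0)) :
    HasSum (fun n => f n - f (n + 1)) (f 0) := by
  rw [hasSum_iff_tendsto_nat_of_nonneg fun n => sub_nonneg.2 (hf n.le_succ)]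
  simp_rw [Finset.sum_range_sub']
  simpa using tendsto_const_nhds.sub hlim

lemma MeasureTheory.MeasurePreserving.integral_comp_of_aestronglyMeasurable {α β E : Type*}
    [MeasurableSpace α] [MeasurableSpace β] [NormedAddCommGroup E] [NormedSpace ℝ E]
    {μ : Measure α} {ν : Measure β} {T : α → β} (hT : MeasurePreserving T μ ν) {g : β → E}
    (hg : AEStronglyMeasurable g ν) : ∫ x, g (T x) ∂μ = ∫ y, g y ∂ν := by
  rw [← hT.map_eq] at hg ⊢
  exact (integral_map hT.aemeasurable hg).symm

lemma inv_goldenRatio_sq_add_self : φ⁻¹ ^ 2 + φ⁻¹ = 1 := by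
  rw [inv_goldenRatio]; linear_combination goldenConj_sq

lemma sqrt_five_sub_one_div_two : (√5 - 1) / 2 = φ⁻¹ := by
  rw [inv_goldenRatio, goldenConj]; ring

-- `gaussMap 0 = 0` because `1 / 0 = 0`, so the orbit bounds below hold on all of `[0, 1]`.
noncomputable def gaussMap (x : ℝ) : ℝ := Int.fract (1 / x)

lemma measurable_gaussMap : Measurable gaussMap :=
  measurable_fract.comp (measurable_const.div measurable_id)

lemma gaussMap_mem_Ico (x : ℝ) : gaussMap x ∈ Ico 0 1 :=
  ⟨Int.fract_nonneg _, Int.fract_lt_one _⟩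

lemma iterate_gaussMap_mem_Icc {x : ℝ} (hx : x ∈ Icc 0 1) (k : ℕ) :
    gaussMap^[k] x ∈ Icc 0 1 := by
  cases k with
  | zero => exact hx
  | succ k =>
    rw [Function.iterate_succ_apply']
    exact Ico_subset_Icc_self (gaussMap_mem_Ico _)

lemma mul_one_add_gaussMap_le_one {y : ℝ} (hy : y ∈ Icc 0 1) : y * (1 + gaussMap y) ≤ 1 := by
  rcases hy.1.eq_or_lt with rfl | hy0
  · simp
  have hfloor : (1 : ℝ) ≤ ⌊1 / y⌋ := by
    exact_mod_cast Int.le_floor.2 (by simpa using (one_le_div hy0).2 hy.2)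
  calc y * (1 + gaussMap y) ≤ y * (⌊1 / y⌋ + Int.fract (1 / y)) := by
        unfold gaussMap; gcongr
    _ = 1 := by rw [Int.floor_add_fract, mul_one_div_cancel hy0.ne']

lemma Tgauss_iterate_apply (f : ℝ → ℝ) (n : ℕ) (x : ℝ) :
    Tgauss^[n] f x = (∏ k ∈ Finset.range n, gaussMap^[k] x) * f (gaussMap^[n] x) := by
  induction n generalizing f with
  | zero => simp
  | succ n ih =>
    rw [Function.iterate_succ_apply, ih, Finset.prod_range_succ, Function.iterate_succ_apply']
    simp only [Tgauss, gaussMap]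
    ring

lemma prod_iterate_gaussMap_mul_le {x : ℝ} (hx : x ∈ Icc 0 1) (n : ℕ) :
    φ⁻¹ * (∏ k ∈ Finset.range n, gaussMap^[k] x) * (1 + φ⁻¹ * gaussMap^[n] x) ≤ φ⁻¹ ^ n := by
  have hg : 0 < φ⁻¹ := inv_pos.2 goldenRatio_pos
  have hg2 := inv_goldenRatio_sq_add_self
  induction n with
  | zero =>
    simp only [Finset.range_zero, Finset.prod_empty, Function.iterate_zero_apply, pow_zero]
    nlinarith [hx.2]
  | succ n ih =>
    set y := gaussMap^[n] x
    have hy := iterate_gaussMap_mem_Icc hx n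
    have hP : 0 ≤ ∏ k ∈ Finset.range n, gaussMap^[k] x :=
      Finset.prod_nonneg fun k _ => (iterate_gaussMap_mem_Icc hx k).1
    have hstep : y * (1 + φ⁻¹ * gaussMap y) ≤ φ⁻¹ * (1 + φ⁻¹ * y) := by
      have := mul_le_mul_of_nonneg_left (mul_one_add_gaussMap_le_one hy) hg.le
      linear_combination this - y * hg2
    rw [Finset.prod_range_succ, Function.iterate_succ_apply', pow_succ]
    calc φ⁻¹ * ((∏ k ∈ Finset.range n, gaussMap^[k] x) * y) * (1 + φ⁻¹ * gaussMap y)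
        = φ⁻¹ * (∏ k ∈ Finset.range n, gaussMap^[k] x) * (y * (1 + φ⁻¹ * gaussMap y)) := by ring
      _ ≤ φ⁻¹ * (∏ k ∈ Finset.range n, gaussMap^[k] x) * (φ⁻¹ * (1 + φ⁻¹ * y)) := by gcongr
      _ = φ⁻¹ * (∏ k ∈ Finset.range n, gaussMap^[k] x) * (1 + φ⁻¹ * y) * φ⁻¹ := by ring
      _ ≤ φ⁻¹ ^ n * φ⁻¹ := by gcongr

lemma prod_iterate_gaussMap_le {x : ℝ} (hx : x ∈ Icc 0 1) (n : ℕ) :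
    ∏ k ∈ Finset.range (n + 1), gaussMap^[k] x ≤ φ⁻¹ ^ n := by
  have hg : 0 < φ⁻¹ := inv_pos.2 goldenRatio_pos
  have hP : 0 ≤ ∏ k ∈ Finset.range (n + 1), gaussMap^[k] x :=
    Finset.prod_nonneg fun k _ => (iterate_gaussMap_mem_Icc hx k).1
  have hy := (iterate_gaussMap_mem_Icc hx (n + 1)).1
  have := prod_iterate_gaussMap_mul_le hx (n + 1)
  rw [pow_succ'] at this
  nlinarith [mul_nonneg hP (mul_nonneg hg.le hy)]

noncomputable def gaussDensity (x : ℝ) : ℝ := 1 / ((1 + x) * log 2)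

lemma gaussDensity_nonneg {x : ℝ} (hx : 0 ≤ x) : 0 ≤ gaussDensity x := by
  have := log_pos one_lt_two
  unfold gaussDensity
  positivity

lemma add_natCast_add_one_pos {y : ℝ} (hy : 0 ≤ y) (k : ℕ) : 0 < y + (k + 1) :=
  add_pos_of_nonneg_of_pos hy k.cast_add_one_pos

noncomputable def gaussBranch (k : ℕ) (y : ℝ) : ℝ := (y + (k + 1))⁻¹

lemma gaussMap_gaussBranch {y : ℝ} (hy : y ∈ Ico 0 1) (k : ℕ) :
    gaussMap (gaussBranch k y) = y := by
  rw [gaussMap, gaussBranch, one_div, inv_inv, ← Nat.cast_add_one, Int.fract_add_natCast,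
    Int.fract_eq_self.2 hy]

lemma injOn_gaussBranch (k : ℕ) : InjOn (gaussBranch k) (Ico 0 1) :=
  fun y hy y' hy' h => by rw [← gaussMap_gaussBranch hy k, h, gaussMap_gaussBranch hy' k]

lemma measurableSet_image_gaussBranch (k : ℕ) : MeasurableSet (gaussBranch k '' Ico 0 1) := by
  refine measurableSet_Ico.image_of_continuousOn_injOn ?_ (injOn_gaussBranch k)
  exact ContinuousOn.inv₀ (by fun_prop) fun y hy => by linarith [hy.1]

lemma pairwise_disjoint_image_gaussBranch :
    Pairwise (Disjoint on fun k => gaussBranch k '' Ico 0 1) := by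
  intro j k hjk
  rw [Function.onFun, Set.disjoint_left]
  rintro _ ⟨y, hy, rfl⟩ ⟨y', hy', h⟩
  obtain rfl : y' = y := by rw [← gaussMap_gaussBranch hy' k, h, gaussMap_gaussBranch hy j]
  exact hjk (by simpa [gaussBranch] using h.symm)

lemma iUnion_image_gaussBranch : ⋃ k, gaussBranch k '' Ico 0 1 = Ioc 0 1 := by
  ext x
  simp only [mem_iUnion, mem_image]
  constructor
  · rintro ⟨k, y, hy, rfl⟩
    exact ⟨inv_pos.2 (add_natCast_add_one_pos hy.1 k),
      inv_le_one_of_one_le₀ (by linarith [hy.1, (k.cast_nonneg : (0 : ℝ) ≤ k)])⟩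
  · rintro ⟨hx0, hx1⟩
    obtain ⟨k, hk⟩ :=
      Nat.exists_eq_add_of_le' ((Nat.one_le_floor_iff _).2 ((one_le_inv₀ hx0).2 hx1))
    refine ⟨k, x⁻¹ - ⌊x⁻¹⌋₊, ⟨sub_nonneg.2 (Nat.floor_le (by positivity)), ?_⟩, ?_⟩
    · linarith [Nat.lt_floor_add_one x⁻¹]
    · simp [gaussBranch, hk]

lemma lintegral_image_gaussBranch (k : ℕ) (G : ℝ → ℝ≥0∞) :
    ∫⁻ x in gaussBranch k '' Ico 0 1, ENNReal.ofReal (gaussDensity x) * G (gaussMap x) =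
      ∫⁻ y in Ico 0 1,
        ENNReal.ofReal (gaussDensity (gaussBranch k y) / (y + (k + 1)) ^ 2) * G y := by
  have hderiv : ∀ y ∈ Ico (0 : ℝ) 1, HasDerivWithinAt (gaussBranch k)
      (-1 / (y + (k + 1)) ^ 2) (Ico 0 1) y := fun y hy =>
    (((hasDerivAt_id y).add_const _).inv (add_natCast_add_one_pos hy.1 k).ne').hasDerivWithinAt
  rw [lintegral_image_eq_lintegral_abs_deriv_mul measurableSet_Ico hderiv (injOn_gaussBranch k)]
  refine setLIntegral_congr_fun measurableSet_Ico fun y hy => ?_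
  rw [gaussMap_gaussBranch hy, ← mul_assoc, ← ENNReal.ofReal_mul (abs_nonneg _), neg_div, abs_neg,
    abs_of_nonneg (by positivity), div_mul_eq_mul_div, one_mul]

lemma hasSum_gaussDensity_gaussBranch {y : ℝ} (hy : 0 ≤ y) :
    HasSum (fun k : ℕ => gaussDensity (gaussBranch k y) / (y + (k + 1)) ^ 2) (gaussDensity y) := by
  have hanti : Antitone fun k : ℕ => (y + (k + 1))⁻¹ := fun a b hab => by dsimp only; gcongr
  have hlim : Tendsto (fun k : ℕ => (y + (k + 1))⁻¹) atTop (𝓝 0) :=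
    tendsto_inv_atTop_zero.comp <| tendsto_atTop_add_const_left _ y <|
      tendsto_atTop_add_const_right _ 1 tendsto_natCast_atTop_atTop
  have hterm (k : ℕ) : gaussDensity (gaussBranch k y) / (y + (k + 1)) ^ 2 =
      (log 2)⁻¹ * ((y + (k + 1))⁻¹ - (y + ((k + 1 : ℕ) + 1))⁻¹) := by
    have hpos := add_natCast_add_one_pos hy k
    have hlog := log_pos one_lt_two
    simp only [gaussDensity, gaussBranch]
    push_cast
    field_simp
    ring
  simp_rw [hterm]
  have h0 : gaussDensity y = (log 2)⁻¹ * (y + ((0 : ℕ) + 1))⁻¹ := by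
    simp [gaussDensity, add_comm]
  rw [h0]
  exact (hasSum_sub_succ_of_antitone hanti hlim).mul_left (log 2)⁻¹

lemma gaussMeasure_eq_withDensity_gaussDensity :
    gaussMeasure =
      (volume.restrict (Ioo 0 1)).withDensity fun x => ENNReal.ofReal (gaussDensity x) :=
  rfl

lemma lintegral_comp_gaussMap {G : ℝ → ℝ≥0∞} (hG : Measurable G) :
    ∫⁻ x, G (gaussMap x) ∂gaussMeasure = ∫⁻ x, G x ∂gaussMeasure := by
  have hdens : Measurable fun x => ENNReal.ofReal (gaussDensity x) := by
    unfold gaussDensity; fun_prop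
  rw [gaussMeasure_eq_withDensity_gaussDensity,
    lintegral_withDensity_eq_lintegral_mul _ hdens (g := fun x => G (gaussMap x))
      (hG.comp measurable_gaussMap),
    lintegral_withDensity_eq_lintegral_mul _ hdens hG]
  simp only [Pi.mul_apply]
  calc ∫⁻ x in Ioo 0 1, ENNReal.ofReal (gaussDensity x) * G (gaussMap x)
      = ∫⁻ x in ⋃ k, gaussBranch k '' Ico 0 1,
          ENNReal.ofReal (gaussDensity x) * G (gaussMap x) := by
        rw [iUnion_image_gaussBranch]; exact setLIntegral_congr Ioo_ae_eq_Ioc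
    _ = ∑' k : ℕ, ∫⁻ y in Ico 0 1,
          ENNReal.ofReal (gaussDensity (gaussBranch k y) / (y + (k + 1)) ^ 2) * G y := by
        rw [lintegral_iUnion measurableSet_image_gaussBranch pairwise_disjoint_image_gaussBranch]
        simp only [lintegral_image_gaussBranch]
    _ = ∫⁻ y in Ico 0 1, ENNReal.ofReal (gaussDensity y) * G y := by
        have hmeas (k : ℕ) : Measurable fun y =>
            ENNReal.ofReal (gaussDensity (gaussBranch k y) / (y + (k + 1)) ^ 2) * G y := by
          unfold gaussDensity gaussBranch; fun_prop
        rw [← lintegral_tsum fun k => (hmeas k).aemeasurable]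
        refine setLIntegral_congr_fun measurableSet_Ico fun y hy => ?_
        rw [ENNReal.tsum_mul_right, ← ENNReal.ofReal_tsum_of_nonneg (fun k => ?_)
          (hasSum_gaussDensity_gaussBranch hy.1).summable,
          (hasSum_gaussDensity_gaussBranch hy.1).tsum_eq]
        exact div_nonneg (gaussDensity_nonneg (inv_nonneg.2 (add_natCast_add_one_pos hy.1 k).le))
          (sq_nonneg _)
    _ = ∫⁻ y in Ioo 0 1, ENNReal.ofReal (gaussDensity y) * G y :=
        setLIntegral_congr Ioo_ae_eq_Ico.symm

lemma measurePreserving_gaussMap : MeasurePreserving gaussMap gaussMeasure gaussMeasure := by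
  refine ⟨measurable_gaussMap, Measure.ext_of_lintegral _ fun G hG => ?_⟩
  rw [lintegral_map hG measurable_gaussMap, lintegral_comp_gaussMap hG]

lemma ae_mem_Icc_gaussMeasure : ∀ᵐ x ∂gaussMeasure, x ∈ Icc 0 1 :=
  (withDensity_absolutelyContinuous _ _).ae_le <|
    ae_restrict_of_forall_mem measurableSet_Ioo fun _ hx => Ioo_subset_Icc_self hx

lemma abs_iterate_Tgauss_rpow_le {x : ℝ} (hx : x ∈ Icc 0 1) (f : ℝ → ℝ) {p : ℝ} (hp : 0 ≤ p)
    (m : ℕ) : |Tgauss^[m + 1] f x| ^ p ≤ φ⁻¹ ^ (m * p) * |f (gaussMap^[m + 1] x)| ^ p := by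
  have hP : 0 ≤ ∏ k ∈ Finset.range (m + 1), gaussMap^[k] x :=
    Finset.prod_nonneg fun k _ => (iterate_gaussMap_mem_Icc hx k).1
  rw [Tgauss_iterate_apply, abs_mul, abs_of_nonneg hP, mul_rpow hP (abs_nonneg _),
    rpow_mul (inv_pos.2 goldenRatio_pos).le, rpow_natCast]
  gcongr
  exact prod_iterate_gaussMap_le hx m

/-- For `f ∈ L^p(m)` with `m` the Gauss measure, the iterates of `T` satisfy
`∫ |Tⁿ f|^p dm ≤ g^{(n-1)p} ∫ |f|^p dm`, where `g = (√5 - 1)/2`. -/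
theorem iterate_Top_norm_bound (p : ℝ) (hp : 1 ≤ p) (f : ℝ → ℝ)
    (hf : MemLp f (ENNReal.ofReal p) gaussMeasure) (n : ℕ) (hn : 1 ≤ n) :
    ∫ x, |Tgauss^[n] f x| ^ p ∂gaussMeasure ≤
      ((Real.sqrt 5 - 1) / 2) ^ (((n : ℝ) - 1) * p) * ∫ x, |f x| ^ p ∂gaussMeasure := by
  obtain ⟨m, rfl⟩ := Nat.exists_eq_add_of_le' hn
  have hp0 : 0 < p := by linarith
  have hpres := measurePreserving_gaussMap.iterate (m + 1)
  have hint : Integrable (fun x => |f (gaussMap^[m + 1] x)| ^ p) gaussMeasure := by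
    simpa [ENNReal.toReal_ofReal hp0.le] using
      (hf.comp_measurePreserving hpres).integrable_norm_rpow (by simpa using hp0)
        ENNReal.ofReal_ne_top
  rw [sqrt_five_sub_one_div_two, Nat.cast_add_one, add_sub_cancel_right]
  calc ∫ x, |Tgauss^[m + 1] f x| ^ p ∂gaussMeasure
      ≤ ∫ x, φ⁻¹ ^ (m * p) * |f (gaussMap^[m + 1] x)| ^ p ∂gaussMeasure :=
        integral_mono_of_nonneg (ae_of_all _ fun _ => by positivity) (hint.const_mul _)
          (ae_mem_Icc_gaussMeasure.mono fun x hx => abs_iterate_Tgauss_rpow_le hx f hp0.le m)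
    _ = φ⁻¹ ^ (m * p) * ∫ x, |f x| ^ p ∂gaussMeasure := by
        rw [integral_const_mul, hpres.integral_comp_of_aestronglyMeasurable
          (hf.1.aemeasurable.abs.pow_const p).aestronglyMeasurable]
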